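/- Let T ≥ 1 and let G_T : ℝ^T → ℝ be as in the lower-bound construction. For x ∈ ℝ^T let prog_{1/2}(x) := max{i ∈ {0,…,T} : |x_i| > 1/2} with the convention x₀ := 1. Then for every q ≥ 1 and all indices i₁, …, i_q ∈ {1,…,T} with max_j i_j > prog_{1/2}(x) + 1, the mixed partial derivative ∂^q G_T/∂x_{i₁}⋯∂x_{i_q}(x) = 0. -/

import Mathlib

/-- The bump-like component function `Ψ` of the hard-instance construction. -/
noncomputable def Psi (x : ℝ) : ℝ :=
  if 1 / 2 < x then Real.exp (1 - 1 / (2 * x - 1) ^ 2) else 0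

/-- The component function `Λ` of the hard-instance construction. -/
noncomputable def Lam (x : ℝ) : ℝ := 8 * (Real.exp (-x ^ 2 / 2) - 1)

/-- The hard instance `G_T(x) = Ψ(1)Λ(x₁) + ∑_{i=2}^T [Ψ(-x_{i-1})Λ(-x_i) + Ψ(x_{i-1})Λ(x_i)]`
(coordinates are `0`-indexed in Lean: mathematical `x_i` is Lean's `x ⟨i-1, _⟩`). -/
noncomputable def G (T : ℕ) (x : EuclideanSpace ℝ (Fin T)) : ℝ :=
  ∑ i : Fin T,
    if (i : ℕ) = 0 then Psi 1 * Lam (x i)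
    else
      Psi (-(x ⟨(i : ℕ) - 1, Nat.lt_of_le_of_lt (Nat.sub_le _ _) i.isLt⟩)) * Lam (-(x i)) +
        Psi (x ⟨(i : ℕ) - 1, Nat.lt_of_le_of_lt (Nat.sub_le _ _) i.isLt⟩) * Lam (x i)

/-- `prog_α(x) = max{i ∈ {0,…,T} : |x_i| > α}` with the convention `x₀ := 1`
(mathematical index `i` corresponds to the Lean coordinate `j : Fin T` with `j + 1 = i`). -/
noncomputable def prog {T : ℕ} (α : ℝ) (x : EuclideanSpace ℝ (Fin T)) : ℕ :=
  sSup {i : ℕ | i = 0 ∨ ∃ j : Fin T, (j : ℕ) + 1 = i ∧ α < |x j|}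

/-!
Every derivative of `G_T` is a sum of derivatives of its summands, and the summand with index
`i` depends only on `x_{i-1}` and `x_i`. If the derivative is taken along a coordinate
`x_m` with `m > prog_{1/2}(x) + 1`, a summand not reading `x_m` contributes nothing, while the
(at most two) summands reading `x_m` contain the factor `Ψ(±x_{m-1})` or `Ψ(±x_m)` with
`|x_{m-1}|, |x_m| ≤ 1/2`. There `Ψ` is flat: it is smooth, being `e · exp(-1/(2x-1)²)` (a
function flat at `1/2`) cut off at `1/2`, and it vanishes on `(-∞, 1/2]`, so all its derivatives
vanish there; by the Leibniz and Faà di Bruno bounds, so do those of the summand.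
-/

open Set Filter
open scoped ContDiff Topology

section Flat

variable {𝕜 : Type*} [NontriviallyNormedField 𝕜]
  {E F H : Type*} [NormedAddCommGroup E] [NormedSpace 𝕜 E] [NormedAddCommGroup F]
  [NormedSpace 𝕜 F] [NormedAddCommGroup H] [NormedSpace 𝕜 H]

variable (𝕜) in
def FlatAt (f : E → F) (x : E) : Prop := ∀ n : ℕ, iteratedFDeriv 𝕜 n f x = 0

namespace FlatAt

theorem apply_eq_zero {f : E → F} {x : E} (h : FlatAt 𝕜 f x) : f x = 0 := by
  rw [← norm_eq_zero, ← norm_iteratedFDeriv_zero (𝕜 := 𝕜), h 0, norm_zero]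

theorem deriv {f : 𝕜 → F} {a : 𝕜} (h : FlatAt 𝕜 f a) : FlatAt 𝕜 (deriv f) a := fun n ↦ by
  rw [← norm_eq_zero, norm_iteratedFDeriv_eq_norm_iteratedDeriv, ← iteratedDeriv_succ',
    ← norm_iteratedFDeriv_eq_norm_iteratedDeriv, h, norm_zero]

theorem of_eqOn_zero {f : E → F} {U : Set E} (hf : ContDiff 𝕜 ∞ f) (hU : IsOpen U)
    (hfU : EqOn f 0 U) {x : E} (hx : x ∈ closure U) : FlatAt 𝕜 f x := by
  intro n
  have hzero : U ⊆ {y | iteratedFDeriv 𝕜 n f y = 0} := fun y hy ↦ by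
    have hloc : f =ᶠ[𝓝 y] fun _ ↦ 0 := eventuallyEq_of_mem (hU.mem_nhds hy) hfU
    simpa using (hloc.iteratedFDeriv 𝕜 n).eq_of_nhds
  exact closure_minimal hzero
    (isClosed_eq (hf.continuous_iteratedFDeriv (by exact_mod_cast le_top)) continuous_const) hx

theorem comp {g : F → H} {f : E → F} {x : E} (hg : ContDiff 𝕜 ∞ g) (hf : ContDiff 𝕜 ∞ f)
    (h : FlatAt 𝕜 g (f x)) : FlatAt 𝕜 (g ∘ f) x := by
  intro n
  set D := 1 + ∑ i ∈ Finset.range (n + 1), ‖iteratedFDeriv 𝕜 i f x‖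
  have hD : ∀ i, 1 ≤ i → i ≤ n → ‖iteratedFDeriv 𝕜 i f x‖ ≤ D ^ i := fun i hi hin ↦ by
    have hsum : ‖iteratedFDeriv 𝕜 i f x‖ ≤ ∑ k ∈ Finset.range (n + 1), ‖iteratedFDeriv 𝕜 k f x‖ :=
      Finset.single_le_sum (f := fun k ↦ ‖iteratedFDeriv 𝕜 k f x‖) (fun k _ ↦ norm_nonneg _)
        (Finset.mem_range.2 (Nat.lt_succ_of_le hin))
    have hD1 : 1 ≤ D := le_add_of_nonneg_right (Finset.sum_nonneg fun _ _ ↦ norm_nonneg _)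
    calc ‖iteratedFDeriv 𝕜 i f x‖ ≤ D := by linarith
      _ ≤ D ^ i := le_self_pow₀ hD1 (by omega)
  simpa using norm_iteratedFDeriv_comp_le hg hf (by exact_mod_cast le_top) x (C := 0)
    (fun i _ ↦ by rw [h i, norm_zero]) hD

theorem mul {A : Type*} [NormedRing A] [NormedAlgebra 𝕜 A] {f g : E → A} {x : E}
    (hf : ContDiff 𝕜 ∞ f) (hg : ContDiff 𝕜 ∞ g) (h : FlatAt 𝕜 f x) :
    FlatAt 𝕜 (fun y ↦ f y * g y) x := fun n ↦ by
  simpa [h _] using norm_iteratedFDeriv_mul_le hf hg x (n := n) (by exact_mod_cast le_top)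

theorem add {f g : E → F} {x : E} (hf : ContDiff 𝕜 ∞ f) (hg : ContDiff 𝕜 ∞ g)
    (hfx : FlatAt 𝕜 f x) (hgx : FlatAt 𝕜 g x) : FlatAt 𝕜 (fun y ↦ f y + g y) x := fun n ↦ by
  rw [fun_iteratedFDeriv_add_apply (hf.of_le (by exact_mod_cast le_top)).contDiffAt
    (hg.of_le (by exact_mod_cast le_top)).contDiffAt, hfx n, hgx n, add_zero]

end FlatAt

theorem iteratedFDeriv_comp_clm_apply_eq_zero {n : ℕ} {g : F → H} (hg : ContDiff 𝕜 n g)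
    (L : E →L[𝕜] F) (x : E) {m : Fin n → E} {j : Fin n} (hj : L (m j) = 0) :
    iteratedFDeriv 𝕜 n (g ∘ L) x m = 0 := by
  rw [L.iteratedFDeriv_comp_right hg x le_rfl,
    ContinuousMultilinearMap.compContinuousLinearMap_apply]
  exact ContinuousMultilinearMap.map_coord_zero _ j hj

end Flat

section Indicator

variable {F : Type*} [NormedAddCommGroup F] [NormedSpace ℝ F]

theorem hasDerivAt_indicator_Ioi {g : ℝ → F} {a : ℝ} (hg : Differentiable ℝ g)
    (hga : g a = 0) (hg'a : deriv g a = 0) (x : ℝ) :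
    HasDerivAt ((Ioi a).indicator g) ((Ioi a).indicator (deriv g) x) x := by
  rcases lt_trichotomy x a with hx | rfl | hx
  · rw [indicator_of_notMem (notMem_Ioi.2 hx.le)]
    refine (hasDerivAt_const x 0).congr_of_eventuallyEq ?_
    filter_upwards [Iio_mem_nhds hx] with y hy
    exact indicator_of_notMem (notMem_Ioi.2 hy.le) _
  · -- the indicator is dominated by `g`, which is `o(y - x)` since `g x = g' x = 0`
    rw [indicator_of_notMem (notMem_Ioi.2 le_rfl), hasDerivAt_iff_isLittleO]
    have hgo := hasDerivAt_iff_isLittleO.1 (hg'a ▸ (hg x).hasDerivAt)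
    simp only [hga, smul_zero, sub_zero, indicator_of_notMem (notMem_Ioi.2 (le_refl x))]
      at hgo ⊢
    refine (Asymptotics.IsBigO.of_bound 1 (Eventually.of_forall fun y ↦ ?_)).trans_isLittleO hgo
    rw [one_mul]
    exact norm_indicator_le_norm_self g y
  · rw [indicator_of_mem (mem_Ioi.2 hx)]
    refine (hg x).hasDerivAt.congr_of_eventuallyEq ?_
    filter_upwards [Ioi_mem_nhds hx] with y hy
    exact indicator_of_mem hy g

theorem contDiff_indicator_Ioi {g : ℝ → F} {a : ℝ} (hg : ContDiff ℝ ∞ g) (h : FlatAt ℝ g a) :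
    ContDiff ℝ ∞ ((Ioi a).indicator g) := by
  have hderiv {g : ℝ → F} (hg : ContDiff ℝ ∞ g) (h : FlatAt ℝ g a) (x : ℝ) :=
    hasDerivAt_indicator_Ioi (hg.differentiable (by simp)) h.apply_eq_zero
      h.deriv.apply_eq_zero x
  rw [contDiff_infty]
  intro n
  induction n generalizing g with
  | zero =>
    exact contDiff_zero.2 (continuous_iff_continuousAt.2 fun x ↦ (hderiv hg h x).continuousAt)
  | succ n ih =>
    rw [Nat.cast_add_one, contDiff_succ_iff_deriv]
    refine ⟨fun x ↦ (hderiv hg h x).differentiableAt, by simp, ?_⟩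
    rw [show deriv ((Ioi a).indicator g) = (Ioi a).indicator (deriv g) from
      funext fun x ↦ (hderiv hg h x).deriv]
    exact ih (contDiff_infty_iff_deriv.1 hg).2 h.deriv

end Indicator

theorem Psi_eq_indicator :
    Psi = (Ioi (1 / 2)).indicator fun x ↦ Real.exp 1 * expNegInvGlue ((2 * x - 1) ^ 2) := by
  ext x
  by_cases hx : 1 / 2 < x
  · have hpos : 0 < (2 * x - 1) ^ 2 := by nlinarith
    rw [Psi, if_pos hx, indicator_of_mem (mem_Ioi.2 hx), expNegInvGlue, if_neg hpos.not_ge,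
      ← Real.exp_add, one_div, sub_eq_add_neg]
  · rw [Psi, if_neg hx, indicator_of_notMem (notMem_Ioi.2 (not_lt.1 hx))]

@[fun_prop]
theorem contDiff_Psi : ContDiff ℝ ∞ Psi := by
  have hglue : ContDiff ℝ ∞ fun t ↦ Real.exp 1 * expNegInvGlue t :=
    contDiff_const.mul expNegInvGlue.contDiff
  have hsq : ContDiff ℝ ∞ fun x : ℝ ↦ (2 * x - 1) ^ 2 := by fun_prop
  have hflat : FlatAt ℝ (fun t ↦ Real.exp 1 * expNegInvGlue t) ((2 * (1 / 2) - 1) ^ 2) :=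
    FlatAt.of_eqOn_zero (U := Iio 0) hglue isOpen_Iio
      (fun t ht ↦ by simp [expNegInvGlue.zero_of_nonpos ht.le]) (by norm_num)
  rw [Psi_eq_indicator]
  exact contDiff_indicator_Ioi (hglue.comp hsq)
    (hflat.comp (g := fun t ↦ Real.exp 1 * expNegInvGlue t) hglue hsq)

theorem flatAt_Psi {y : ℝ} (hy : y ≤ 1 / 2) : FlatAt ℝ Psi y :=
  FlatAt.of_eqOn_zero (U := Iio (1 / 2)) contDiff_Psi isOpen_Iio
    (fun z hz ↦ if_neg (not_lt.2 hz.le)) (by simpa using hy)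

@[fun_prop]
theorem contDiff_Lam : ContDiff ℝ ∞ Lam := by
  unfold Lam
  fun_prop

/-- The summand `Ψ(-x_{i-1})Λ(-x_i) + Ψ(x_{i-1})Λ(x_i)` of `G_T` as a function of
`p = (x_{i-1}, x_i)`. -/
noncomputable def chainLink (p : ℝ × ℝ) : ℝ := Psi (-p.1) * Lam (-p.2) + Psi p.1 * Lam p.2

theorem contDiff_chainLink : ContDiff ℝ ∞ chainLink := by
  unfold chainLink
  fun_prop

theorem flatAt_chainLink {p : ℝ × ℝ} (hp : |p.1| ≤ 1 / 2) : FlatAt ℝ chainLink p := by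
  refine FlatAt.add (by fun_prop) (by fun_prop) (FlatAt.mul (by fun_prop) (by fun_prop) ?_)
    (FlatAt.mul (by fun_prop) (by fun_prop) ?_)
  · exact FlatAt.comp (f := fun p : ℝ × ℝ ↦ -p.1) contDiff_Psi (by fun_prop)
      (flatAt_Psi (neg_le.2 (abs_le.1 hp).1))
  · exact FlatAt.comp (f := fun p : ℝ × ℝ ↦ p.1) contDiff_Psi (by fun_prop)
      (flatAt_Psi (abs_le.1 hp).2)

noncomputable def GSummand {T : ℕ} (i : Fin T) : EuclideanSpace ℝ (Fin T) → ℝ :=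
  if (i : ℕ) = 0 then (fun u ↦ Psi 1 * Lam u) ∘ EuclideanSpace.proj i
  else chainLink ∘ (EuclideanSpace.proj ⟨(i : ℕ) - 1, by omega⟩).prod (EuclideanSpace.proj i)

theorem G_eq_sum_GSummand (T : ℕ) : G T = fun y ↦ ∑ i, GSummand i y := by
  ext y
  refine Finset.sum_congr rfl fun i _ ↦ ?_
  unfold GSummand
  split_ifs <;> rfl

theorem contDiff_GSummand {T : ℕ} (i : Fin T) : ContDiff ℝ ∞ (GSummand i) := by
  unfold GSummand
  split_ifs
  · exact (contDiff_const.mul contDiff_Lam).comp (ContinuousLinearMap.contDiff _)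
  · exact contDiff_chainLink.comp (ContinuousLinearMap.contDiff _)

theorem abs_le_of_prog_lt {T : ℕ} {α : ℝ} {x : EuclideanSpace ℝ (Fin T)} {k : Fin T}
    (h : prog α x < k + 1) : |x k| ≤ α := by
  by_contra! hk
  have hbdd : BddAbove {i : ℕ | i = 0 ∨ ∃ j : Fin T, (j : ℕ) + 1 = i ∧ α < |x j|} := by
    refine ⟨T, ?_⟩
    rintro i (rfl | ⟨j, rfl, -⟩)
    exacts [Nat.zero_le T, j.isLt]
  exact h.not_ge (le_csSup hbdd (Or.inr ⟨k, rfl, hk⟩))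

theorem iteratedFDeriv_GSummand_eq_zero {T q : ℕ} (x : EuclideanSpace ℝ (Fin T)) (i : Fin T)
    (idx : Fin q → Fin T) (j : Fin q) (hj : prog (1 / 2) x < idx j) :
    iteratedFDeriv ℝ q (GSummand i) x (fun k ↦ EuclideanSpace.single (idx k) 1) = 0 := by
  unfold GSummand
  split_ifs with hi
  · refine iteratedFDeriv_comp_clm_apply_eq_zero
      ((contDiff_const.mul contDiff_Lam).of_le (by exact_mod_cast le_top)) _ x (j := j) ?_
    simp [Fin.ext_iff]
    omega
  · by_cases hnear : (idx j : ℕ) = i - 1 ∨ (idx j : ℕ) = i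
    · have hxa : |x ⟨(i : ℕ) - 1, by omega⟩| ≤ 1 / 2 :=
        abs_le_of_prog_lt (by show prog (1 / 2) x < (i : ℕ) - 1 + 1; omega)
      rw [(flatAt_chainLink hxa).comp contDiff_chainLink (ContinuousLinearMap.contDiff _) q,
        zero_apply]
    · refine iteratedFDeriv_comp_clm_apply_eq_zero
        (contDiff_chainLink.of_le (by exact_mod_cast le_top)) _ x (j := j) ?_
      simp [Fin.ext_iff]
      omega

theorem stmt_16_general (T : ℕ) (x : EuclideanSpace ℝ (Fin T))
    (q : ℕ) (idx : Fin q → Fin T)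
    (hidx : ∃ j : Fin q, prog (1 / 2) x + 1 < (idx j : ℕ) + 1) :
    iteratedFDeriv ℝ q (G T) x (fun j => EuclideanSpace.single (idx j) 1) = 0 := by
  obtain ⟨j, hj⟩ := hidx
  rw [G_eq_sum_GSummand, iteratedFDeriv_sum fun i _ ↦
      (contDiff_GSummand i).of_le (by exact_mod_cast le_top),
    Finset.sum_apply, sum_apply]
  exact Finset.sum_eq_zero fun i _ ↦ iteratedFDeriv_GSummand_eq_zero x i idx j (by omega)

/-- Zero-chain property of `G_T`: for `q ≥ 1` and indices
`i₁, …, i_q` (as `idx : Fin q → Fin T`, `1`-indexed value `(idx j) + 1`), if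
`max_j (idx j + 1) > prog_{1/2}(x) + 1` then the corresponding mixed partial derivative
`∂^q G_T / ∂x_{i₁} ⋯ ∂x_{i_q}` vanishes at `x`. -/
theorem stmt_16 (T : ℕ) (hT : 1 ≤ T) (x : EuclideanSpace ℝ (Fin T))
    (q : ℕ) (hq : 1 ≤ q) (idx : Fin q → Fin T)
    (hidx : ∃ j : Fin q, prog (1 / 2) x + 1 < (idx j : ℕ) + 1) :
    iteratedFDeriv ℝ q (G T) x (fun j => EuclideanSpace.single (idx j) 1) = 0 :=
  stmt_16_general T x q idx hidx
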